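/- arXiv:2311.18754 — 2 statements merged into one kernel-verified Lean document; each statement's English description precedes it below -/
import Mathlib

section
/- If a real-analytic function F : V → ℝ on an open subset V of ℂᵐ can be written as F = ∑_j |h_j|² for holomorphic functions h_j : V → ℂ (with locally uniform convergence), then e^F − 1 can also be written as a convergent sum ∑_k |k_j|² of moduli squared of holomorphic functions on V, where one may take the k_j to be the normalized monomials in the h_j arising from the exponential series: e^F = ∑_{multi-indices α} |h^α|²/α!. -/
/-!
Pointwise, with `x j = |h j z|²`, the claim is `exp (∑ x j) = ∑_α ∏_j x j ^ α j / (α j)!`,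
i.e. the expansion of the infinite product `∏_j exp (x j) = ∏_j ∑_n x j ^ n / n!` of
nonnegative series into a series over finitely supported multi-indices. The sum of the terms
over a box `{α | supp α ⊆ s, α ≤ n}` is the finite product `∏_{j ∈ s} ∑_{k < n} x j ^ k / k!`;
every finite set of multi-indices lies in such a box, and these products converge to the
infinite product, so the latter is the least upper bound of the finite partial sums.
-/

open Finset Filter

theorem Finset.sum_finsupp_prod_eq_prod_sum {ι M R : Type*} [Zero M] [CommSemiring R]
    (s : Finset ι) (t : ι → Finset M) {f : ι → M → R} (hf : ∀ i, f i 0 = 1) :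
    ∑ α ∈ s.finsupp t, α.prod f = ∏ i ∈ s, ∑ k ∈ t i, f i k := by
  classical
  rw [Finset.prod_sum, Finset.finsupp, Finset.sum_map]
  refine Finset.sum_congr rfl fun p _ => ?_
  rw [Function.Embedding.coeFn_mk,
    Finsupp.prod_of_support_subset _ (Finsupp.support_indicator_subset s p) _ fun i _ => hf i,
    ← Finset.prod_attach]
  exact Finset.prod_congr rfl fun i _ => by rw [Finsupp.indicator_of_mem i.2]

theorem Finset.exists_subset_finsupp_range {ι : Type*} (u : Finset (ι →₀ ℕ)) :
    ∃ (s : Finset ι) (n : ℕ), u ⊆ s.finsupp fun _ => range n := by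
  classical
  refine ⟨u.sup Finsupp.support, u.sup (fun α => α.support.sup α) + 1, fun α hα => ?_⟩
  rw [Finset.mem_finsupp_iff]
  refine ⟨Finset.le_sup (f := Finsupp.support) hα, fun i _ => ?_⟩
  rw [Finset.mem_range, Nat.lt_succ_iff]
  by_cases hi : i ∈ α.support
  · exact (Finset.le_sup (f := α) hi).trans (Finset.le_sup (f := fun α => α.support.sup α) hα)
  · simp [Finsupp.notMem_support_iff.mp hi]

theorem hasSum_finsupp_prod_of_hasProd {ι : Type*} {f : ι → ℕ → ℝ} {t : ι → ℝ} {T : ℝ}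
    (hf0 : ∀ i, f i 0 = 1) (hf : ∀ i n, 0 ≤ f i n) (ht : ∀ i, HasSum (f i) (t i))
    (hT : HasProd t T) :
    HasSum (fun α : ι →₀ ℕ => α.prod f) T := by
  have hprod_nonneg (α : ι →₀ ℕ) : 0 ≤ α.prod f := Finset.prod_nonneg fun i _ => hf i _
  have hbox (s : Finset ι) (n : ℕ) :
      ∑ α ∈ s.finsupp (fun _ => range n), α.prod f = ∏ i ∈ s, ∑ k ∈ range n, f i k :=
    s.sum_finsupp_prod_eq_prod_sum _ hf0
  refine hasSum_of_isLUB_of_nonneg _ hprod_nonneg ⟨?_, fun b hb => ?_⟩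
  · rintro _ ⟨u, rfl⟩
    obtain ⟨s, n, hu⟩ := u.exists_subset_finsupp_range
    have ht_one (i : ι) : 1 ≤ t i := hf0 i ▸ le_hasSum (ht i) 0 fun n _ => hf i n
    calc ∑ α ∈ u, α.prod f ≤ ∑ α ∈ s.finsupp (fun _ => range n), α.prod f :=
          Finset.sum_le_sum_of_subset_of_nonneg hu fun α _ _ => hprod_nonneg α
      _ = ∏ i ∈ s, ∑ k ∈ range n, f i k := hbox s n
      _ ≤ ∏ i ∈ s, t i :=
          Finset.prod_le_prod (fun i _ => Finset.sum_nonneg fun k _ => hf i k)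
            fun i _ => sum_le_hasSum _ (fun k _ => hf i k) (ht i)
      _ ≤ T := ge_of_tendsto hT <| eventually_atTop.2 ⟨s, fun s' hs' =>
          Finset.prod_le_prod_of_subset_of_one_le hs' (fun i _ => zero_le_one.trans (ht_one i))
            fun i _ _ => ht_one i⟩
  · have hbox_le (s : Finset ι) (n : ℕ) : ∏ i ∈ s, ∑ k ∈ range n, f i k ≤ b :=
      hbox s n ▸ hb ⟨_, rfl⟩
    have hpartial_le (s : Finset ι) : ∏ i ∈ s, t i ≤ b :=
      le_of_tendsto' (tendsto_finsetProd s fun i _ => (ht i).tendsto_sum_nat) (hbox_le s)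
    exact le_of_tendsto' hT hpartial_le

theorem Real.hasSum_finsupp_prod_pow_div_factorial {ι : Type*} {x : ι → ℝ} {A : ℝ}
    (hx : ∀ i, 0 ≤ x i) (hA : HasSum x A) :
    HasSum (fun α : ι →₀ ℕ => α.prod fun i n => x i ^ n / n.factorial) (Real.exp A) :=
  hasSum_finsupp_prod_of_hasProd (fun i => by simp)
    (fun i n => div_nonneg (pow_nonneg (hx i) n) n.factorial.cast_nonneg)
    (fun i => Real.exp_eq_exp_ℝ ▸ NormedSpace.expSeries_div_hasSum_exp (x i)) hA.rexp

theorem stmt1_general (m : ℕ) (V : Set (Fin m → ℂ))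
    (F : (Fin m → ℂ) → ℝ) (h : ℕ → (Fin m → ℂ) → ℂ)
    (hloc : TendstoLocallyUniformlyOn
      (fun (s : Finset ℕ) z => ∑ j ∈ s, ‖h j z‖ ^ 2) F Filter.atTop V) :
    ∀ z ∈ V,
      (Summable fun α : ℕ →₀ ℕ =>
        (∏ j ∈ α.support, ‖h j z‖ ^ (α j)) ^ 2
          / (∏ j ∈ α.support, Nat.factorial (α j) : ℝ)) ∧
      Real.exp (F z) = ∑' α : ℕ →₀ ℕ,
        (∏ j ∈ α.support, ‖h j z‖ ^ (α j)) ^ 2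
          / (∏ j ∈ α.support, Nat.factorial (α j) : ℝ) := by
  intro z hz
  have hterm (α : ℕ →₀ ℕ) : (∏ j ∈ α.support, ‖h j z‖ ^ (α j)) ^ 2
      / (∏ j ∈ α.support, Nat.factorial (α j) : ℝ)
      = α.prod fun j n => (‖h j z‖ ^ 2) ^ n / n.factorial := by
    rw [Finsupp.prod, Finset.prod_div_distrib, ← Finset.prod_pow]
    simp only [← pow_mul, mul_comm 2]
  have hexp := Real.hasSum_finsupp_prod_pow_div_factorial (fun j => sq_nonneg ‖h j z‖)
    (hloc.tendsto_at hz)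
  simp only [hterm]
  exact ⟨hexp.summable, hexp.tsum_eq.symm⟩

theorem stmt1 (m : ℕ) (V : Set (Fin m → ℂ)) (hV : IsOpen V)
    (F : (Fin m → ℂ) → ℝ) (h : ℕ → (Fin m → ℂ) → ℂ)
    (hhol : ∀ j, DifferentiableOn ℂ (h j) V)
    (hF : ∀ z ∈ V, F z = ∑' j, ‖h j z‖ ^ 2)
    (hloc : TendstoLocallyUniformlyOn
      (fun (s : Finset ℕ) z => ∑ j ∈ s, ‖h j z‖ ^ 2) F Filter.atTop V) :
    ∀ z ∈ V,
      (Summable fun α : ℕ →₀ ℕ =>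
        (∏ j ∈ α.support, ‖h j z‖ ^ (α j)) ^ 2
          / (∏ j ∈ α.support, Nat.factorial (α j) : ℝ)) ∧
      Real.exp (F z) = ∑' α : ℕ →₀ ℕ,
        (∏ j ∈ α.support, ‖h j z‖ ^ (α j)) ^ 2
          / (∏ j ∈ α.support, Nat.factorial (α j) : ℝ) :=
  stmt1_general m V F h hloc
end

section
/- Let D_q(z₀, z) = |z₀ + ε|^{2c} e^{c ψ(z)} − ε^c (z₀ + ε)^c − ε^c (\bar{z₀} + ε)^c + ε^{2c}, where ε > 0, c > 0, and ψ is smooth with ψ(0) = 0. Then the mixed second derivative ∂²/∂z₀∂\bar{z₀} of e^{D_q(z₀,z)} − 1 evaluated at z₀ = 0 equals c² ε^{2c−2} e^{D_q(0,z)} ( ε^{2c} (e^{cψ(z)} − 1)² + e^{cψ(z)} ). -/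
/-! Write `u w = (w + ε) ^ c`, so that `H w v = exp (P (u w) (u v))` with
`P x y = A x y - E x - E y + K`. The mixed derivative at the origin is
`u'(0)² · exp P · (∂ₓP · ∂ᵧP + ∂ₓ∂ᵧP)`, and at `u 0 = E = ε ^ c`, `K = ε ^ (2c)` the exponent
collapses to `ε ^ (2c) (A - 1)` and `∂ₓP = ∂ᵧP = ε ^ c (A - 1)`. -/

open Complex

section PolarizedExp

variable {u : ℂ → ℂ} {d : ℂ} (A E K : ℂ)

theorem deriv_cexp_polarized_right (hu : HasDerivAt u d 0) (w : ℂ) :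
    deriv (fun v => cexp (u w * u v * A - E * u w - E * u v + K)) 0
      = cexp (u w * u 0 * A - E * u w - E * u 0 + K) * ((u w * A - E) * d) := by
  have hF : HasDerivAt (fun v => u w * u v * A - E * u w - E * u v + K)
      ((u w * A - E) * d) 0 :=
    ((((hu.const_mul (u w)).mul_const A).sub_const (E * u w)).sub
      (hu.const_mul E)).add_const K |>.congr_deriv (by ring)
  exact hF.cexp.deriv

theorem deriv_deriv_cexp_polarized (hu : HasDerivAt u d 0) :
    deriv (fun w => deriv (fun v => cexp (u w * u v * A - E * u w - E * u v + K)) 0) 0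
      = d ^ 2 * cexp (u 0 ^ 2 * A - 2 * E * u 0 + K) * ((u 0 * A - E) ^ 2 + A) := by
  simp_rw [deriv_cexp_polarized_right A E K hu]
  have hF : HasDerivAt (fun w => u w * u 0 * A - E * u w - E * u 0 + K)
      ((u 0 * A - E) * d) 0 :=
    ((((hu.mul_const (u 0)).mul_const A).sub (hu.const_mul E)).sub_const (E * u 0)).add_const K
      |>.congr_deriv (by ring)
  have hG : HasDerivAt (fun w => (u w * A - E) * d) (A * d * d) 0 :=
    ((hu.mul_const A).sub_const E).mul_const d |>.congr_deriv (by ring)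
  refine (hF.cexp.mul hG).deriv.trans ?_
  rw [show u 0 * u 0 * A - E * u 0 - E * u 0 + K = u 0 ^ 2 * A - 2 * E * u 0 + K by ring]
  ring

end PolarizedExp

theorem hasDerivAt_cpow_add_const {z : ℂ} (hz : z ∈ slitPlane) (s : ℂ) :
    HasDerivAt (fun w => (w + z) ^ s) (s * z ^ (s - 1)) 0 := by
  simpa using ((hasDerivAt_id (0 : ℂ)).add_const z).cpow_const (c := s) (by simpa using hz)

theorem stmt4_general (c ε : ℝ) (hε : 0 < ε)
    (A : ℂ)
    (H : ℂ → ℂ → ℂ)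
    (hH : H = fun w v => Complex.exp
      ((w + ε) ^ (c : ℂ) * (v + ε) ^ (c : ℂ) * A
        - ((ε : ℂ) ^ (c : ℂ)) * (w + ε) ^ (c : ℂ)
        - ((ε : ℂ) ^ (c : ℂ)) * (v + ε) ^ (c : ℂ)
        + (ε : ℂ) ^ ((2 * c : ℝ) : ℂ))) :
    deriv (fun w => deriv (fun v => H w v) 0) 0
      = (c : ℂ) ^ 2 * ((ε ^ (2 * c - 2) : ℝ) : ℂ)
        * Complex.exp (((ε ^ (2 * c) : ℝ) : ℂ) * (A - 1))
        * (((ε ^ (2 * c) : ℝ) : ℂ) * (A - 1) ^ 2 + A) := by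
  have hcpow_mul_two (s : ℂ) : (ε : ℂ) ^ (2 * s) = ((ε : ℂ) ^ s) ^ 2 := by
    rw [← cpow_nat_mul]; norm_num
  have hsq : (ε : ℂ) ^ ((2 * c : ℝ) : ℂ) = ((ε : ℂ) ^ (c : ℂ)) ^ 2 := by
    push_cast; exact hcpow_mul_two c
  have hsq' : (ε : ℂ) ^ ((2 * c - 2 : ℝ) : ℂ) = ((ε : ℂ) ^ ((c : ℂ) - 1)) ^ 2 := by
    rw [← hcpow_mul_two]; push_cast; ring_nf
  subst hH
  rw [deriv_deriv_cexp_polarized A _ _ (hasDerivAt_cpow_add_const (ofReal_mem_slitPlane.mpr hε) c),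
    ofReal_cpow hε.le, ofReal_cpow hε.le, hsq, hsq']
  simp only [zero_add]
  ring_nf

theorem stmt4 (c ε : ℝ) (hc : 0 < c) (hε : 0 < ε) (ψz : ℝ)
    (A : ℂ) (hA : A = Complex.exp (c * ψz))
    (H : ℂ → ℂ → ℂ)
    (hH : H = fun w v => Complex.exp
      ((w + ε) ^ (c : ℂ) * (v + ε) ^ (c : ℂ) * A
        - ((ε : ℂ) ^ (c : ℂ)) * (w + ε) ^ (c : ℂ)
        - ((ε : ℂ) ^ (c : ℂ)) * (v + ε) ^ (c : ℂ)
        + (ε : ℂ) ^ ((2 * c : ℝ) : ℂ))) :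
    deriv (fun w => deriv (fun v => H w v) 0) 0
      = (c : ℂ) ^ 2 * ((ε ^ (2 * c - 2) : ℝ) : ℂ)
        * Complex.exp (((ε ^ (2 * c) : ℝ) : ℂ) * (A - 1))
        * (((ε ^ (2 * c) : ℝ) : ℂ) * (A - 1) ^ 2 + A) :=
  stmt4_general c ε hε A H hH
end
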